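/- arXiv:1809.01426 — 5 statements merged into one kernel-verified Lean document; each statement's English description precedes it below -/
import Mathlib

section
/- Let i = 2j+1 be an odd integer with j ≥ 1, and let w be an infinite word. Suppose there exist factors u, v of w and a nonempty word t such that uv = t³ and u = t^e with rational e ≥ 5/3. Then (uv)^j · u is a product of i factors of w and equals t^x with x = 3j + e ≥ 3i/2 + 1/6. -/
open scoped ENNReal

section Defs
variable {α : Type*}

/-- `u` occurs in the infinite word `w` at position `m`. -/
def FactorAt (u : List α) (w : ℕ → α) (m : ℕ) : Prop :=
  u = (List.range u.length).map (fun n => w (m + n))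

/-- `u` is a factor of the infinite word `w`. -/
def IsFactorI (u : List α) (w : ℕ → α) : Prop := ∃ m, FactorAt u w m

/-- `v` is a product (concatenation) of `i` factors of the infinite word `w`. -/
def IsProd (i : ℕ) (v : List α) (w : ℕ → α) : Prop :=
  ∃ us : Fin i → List α, (∀ j, IsFactorI (us j) w) ∧ v = (List.ofFn us).flatten

/-- `v` is a product of `i` factors of the finite word `w`. -/
def IsProdF (i : ℕ) (v w : List α) : Prop :=
  ∃ us : Fin i → List α, (∀ j, us j <:+: w) ∧ v = (List.ofFn us).flatten

/-- `p` is a period of the finite word `v`. -/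
def HasPeriod (v : List α) (p : ℕ) : Prop :=
  1 ≤ p ∧ p ≤ v.length ∧ ∀ n, n + p < v.length → v[n]? = v[n + p]?

/-- `pexp i w` : supremum of exponents of products of `i` factors of `w`. -/
noncomputable def pexp (i : ℕ) (w : ℕ → α) : ℝ≥0∞ :=
  sSup {x | ∃ v p, IsProd i v w ∧ HasPeriod v p ∧ x = (v.length : ℝ≥0∞) / (p : ℝ≥0∞)}

/-- `cexp w` : supremum of exponents of circular shifts `s ++ p` of factors `p ++ x ++ s`. -/
noncomputable def cexp (w : ℕ → α) : ℝ≥0∞ :=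
  sSup {x | ∃ p xx s q, IsFactorI (p ++ xx ++ s) w ∧ HasPeriod (s ++ p) q ∧
    x = ((s ++ p).length : ℝ≥0∞) / (q : ℝ≥0∞)}

/-- The generalized repetition threshold. -/
noncomputable def RT (i k : ℕ) : ℝ≥0∞ := ⨅ w : ℕ → Fin k, pexp i w

/-- The infinite periodic word `t t t ⋯`. -/
def tomega [Inhabited α] (t : List α) : ℕ → α := fun n => t.getD (n % t.length) default

/-- The prefix of length `L` of the infinite word `w`. -/
def prefixOf (w : ℕ → α) (L : ℕ) : List α := (List.range L).map w

end Defs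

namespace IsProd

variable {α : Type*} {w : ℕ → α}

lemma nil : IsProd 0 ([] : List α) w :=
  ⟨Fin.elim0, fun k => k.elim0, by simp⟩

lemma append {a b : ℕ} {x y : List α} (hx : IsProd a x w) (hy : IsProd b y w) :
    IsProd (a + b) (x ++ y) w := by
  obtain ⟨us, hus, rfl⟩ := hx
  obtain ⟨vs, hvs, rfl⟩ := hy
  refine ⟨Fin.append us vs, Fin.addCases (by simpa using hus) (by simpa using hvs), ?_⟩
  simp [List.ofFn_add]

lemma flatten_replicate {a : ℕ} {x : List α} (hx : IsProd a x w) (k : ℕ) :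
    IsProd (k * a) (List.replicate k x).flatten w := by
  induction k with
  | zero => simpa using nil
  | succ k ih =>
    rw [List.replicate_succ', List.flatten_concat, Nat.succ_mul]
    exact ih.append hx

end IsProd

lemma IsFactorI.isProd {α : Type*} {u : List α} {w : ℕ → α} (h : IsFactorI u w) :
    IsProd 1 u w :=
  ⟨fun _ => u, fun _ => h, by simp⟩

lemma List.flatten_replicate_flatten_replicate {α : Type*} (a b : ℕ) (t : List α) :
    (List.replicate a (List.replicate b t).flatten).flatten =
      (List.replicate (a * b) t).flatten := by
  induction a with
  | zero => simp
  | succ a ih =>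
    rw [List.replicate_succ', List.flatten_append, ih, Nat.succ_mul, List.replicate_add,
      List.flatten_append, List.flatten_singleton]

section Tomega

variable {α : Type*} [Inhabited α] (t : List α)

lemma tomega_mul_length_add (k n : ℕ) : tomega t (k * t.length + n) = tomega t n := by
  simp [tomega, Nat.mul_add_mod_self_right]

lemma prefixOf_tomega_length : prefixOf (tomega t) t.length = t := by
  refine List.ext_getElem (by simp [prefixOf]) fun n hn _ => ?_
  simp only [prefixOf, List.length_map, List.length_range] at hn
  simp [prefixOf, tomega, Nat.mod_eq_of_lt hn, hn]

lemma prefixOf_tomega_length_add (n : ℕ) :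
    prefixOf (tomega t) (t.length + n) = t ++ prefixOf (tomega t) n := by
  rw [prefixOf, List.range_add, List.map_append, ← prefixOf, prefixOf_tomega_length,
    List.map_map, prefixOf]
  congr 1
  refine List.map_congr_left fun m _ => ?_
  simpa [Nat.add_comm] using tomega_mul_length_add t 1 m

lemma prefixOf_tomega_mul_length_add (k n : ℕ) :
    prefixOf (tomega t) (k * t.length + n) =
      (List.replicate k t).flatten ++ prefixOf (tomega t) n := by
  induction k with
  | zero => simp
  | succ k ih =>
    rw [Nat.succ_mul, Nat.add_comm (k * t.length), Nat.add_assoc, prefixOf_tomega_length_add, ih,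
      List.replicate_succ, List.flatten_cons, List.append_assoc]

end Tomega

theorem stmt2_general {α : Type*} [Inhabited α] (w : ℕ → α) (i j : ℕ)
    (hi : i = 2 * j + 1) (u v t : List α)
    (hu : IsFactorI u w) (hv : IsFactorI v w)
    (huv : u ++ v = (List.replicate 3 t).flatten)
    (e : ℚ) (he : 5 / 3 ≤ e) (L : ℕ)
    (hue : u = prefixOf (tomega t) L) :
    IsProd i ((List.replicate j (u ++ v)).flatten ++ u) w ∧
    (List.replicate j (u ++ v)).flatten ++ u = prefixOf (tomega t) (3 * j * t.length + L) ∧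
    (3 * (j : ℚ) + e ≥ 3 * (i : ℚ) / 2 + 1 / 6) := by
  have huv_prod : IsProd 2 (u ++ v) w := hu.isProd.append hv.isProd
  refine ⟨?_, ?_, ?_⟩
  · rw [hi, Nat.mul_comm]
    exact (huv_prod.flatten_replicate j).append hu.isProd
  · rw [huv, List.flatten_replicate_flatten_replicate, prefixOf_tomega_mul_length_add, hue,
      Nat.mul_comm j]
  · subst hi
    push_cast
    linarith

theorem stmt2 {α : Type*} [Inhabited α] (w : ℕ → α) (i j : ℕ) (hj : 1 ≤ j)
    (hi : i = 2 * j + 1) (u v t : List α) (ht : t ≠ [])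
    (hu : IsFactorI u w) (hv : IsFactorI v w)
    (huv : u ++ v = (List.replicate 3 t).flatten)
    (e : ℚ) (he : 5 / 3 ≤ e) (L : ℕ) (hL : (L : ℚ) = e * t.length)
    (hue : u = prefixOf (tomega t) L) :
    IsProd i ((List.replicate j (u ++ v)).flatten ++ u) w ∧
    (List.replicate j (u ++ v)).flatten ++ u = prefixOf (tomega t) (3 * j * t.length + L) ∧
    (3 * (j : ℚ) + e ≥ 3 * (i : ℚ) / 2 + 1 / 6) :=
  stmt2_general w i j hi u v t hu hv huv e he L hue
end

section
/- For every k ≥ 2 and i ≥ 1, RT_{i+1}(k) ≥ RT_i(k) + 1, where RT_i(k) is the infimum over all infinite words w on a k-letter alphabet of pexp_i(w), and pexp_i(w) is the supremum of exponents of repetitions occurring as products of i factors of w. -/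
open scoped ENNReal

/-!
Already `pexp (i + 1) w ≥ pexp i w + 1` for every word `w`. Let `v = u₁ ⋯ uᵢ` be a product of
factors with period `p`. If some `uⱼ` has length at least `p`, then inserting a copy of its
prefix of length `p` in front of it gives a product of `i + 1` factors which still has period
`p` and is `p` letters longer, so its exponent is larger by one. Otherwise `|v| ≤ i p`, so the
exponent of `v` is at most `i`, while `aⁱ⁺¹` is a product of `i + 1` one-letter factors of
exponent `i + 1`.
-/

section Repetitions
variable {α : Type*}

lemma getElem?_append_take_append (A B : List α) {p : ℕ} (hpB : p ≤ B.length) (n : ℕ) :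
    (A ++ (B.take p ++ B))[n]? =
      if n < A.length + p then (A ++ B)[n]? else (A ++ B)[n - p]? := by
  have ht : (B.take p).length = p := List.length_take_of_le hpB
  simp only [List.getElem?_append, List.getElem?_take, ht]
  split_ifs <;> first | rfl | omega | (congr 1; omega)

lemma HasPeriod.append_take_append {A B : List α} {p : ℕ} (hp : HasPeriod (A ++ B) p)
    (hpB : p ≤ B.length) : HasPeriod (A ++ (B.take p ++ B)) p := by
  obtain ⟨hp1, hpv, hper⟩ := hp
  have hlen : (A ++ (B.take p ++ B)).length = (A ++ B).length + p := by
    simp only [List.length_append, List.length_take_of_le hpB]; omega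
  refine ⟨hp1, by omega, fun n hn => ?_⟩
  rw [hlen, List.length_append] at hn
  rw [getElem?_append_take_append A B hpB, getElem?_append_take_append A B hpB]
  by_cases hnA : n < A.length
  · rw [if_pos (by omega), if_pos (by omega)]
    exact hper n (by simp; omega)
  by_cases hnAp : n < A.length + p
  · rw [if_pos hnAp, if_neg (by omega), Nat.add_sub_cancel]
  · rw [if_neg hnAp, if_neg (by omega), Nat.add_sub_cancel, hper (n - p) (by simp; omega),
      Nat.sub_add_cancel (by omega)]

lemma IsFactorI.take {u : List α} {w : ℕ → α} (h : IsFactorI u w) (p : ℕ) :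
    IsFactorI (u.take p) w := by
  obtain ⟨m, hm⟩ := h
  refine ⟨m, ?_⟩
  rw [FactorAt, List.length_take]
  conv_lhs => rw [hm]
  rw [← List.map_take, List.take_range]

lemma isProd_iff_exists_list {i : ℕ} {v : List α} {w : ℕ → α} :
    IsProd i v w ↔
      ∃ L : List (List α), L.length = i ∧ (∀ u ∈ L, IsFactorI u w) ∧ v = L.flatten := by
  constructor
  · rintro ⟨us, hus, rfl⟩
    refine ⟨List.ofFn us, List.length_ofFn, fun u hu => ?_, rfl⟩
    obtain ⟨j, rfl⟩ := List.mem_ofFn.mp hu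
    exact hus j
  · rintro ⟨L, rfl, hL, rfl⟩
    exact ⟨fun j => L[(j : ℕ)], fun j => hL _ (List.getElem_mem _), by rw [List.ofFn_getElem]⟩

lemma exists_isProd_succ_of_le_length {i p : ℕ} {w : ℕ → α} {L : List (List α)}
    (hL : L.length = i) (hfac : ∀ u ∈ L, IsFactorI u w) (hper : HasPeriod L.flatten p)
    {u : List α} (hu : u ∈ L) (hpu : p ≤ u.length) :
    ∃ v, IsProd (i + 1) v w ∧ HasPeriod v p ∧ v.length = L.flatten.length + p := by
  obtain ⟨L₁, L₂, rfl⟩ := List.append_of_mem hu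
  have hsplit : (L₁ ++ u :: L₂).flatten = L₁.flatten ++ (u ++ L₂.flatten) := by
    rw [List.flatten_append, List.flatten_cons]
  have hpB : p ≤ (u ++ L₂.flatten).length := by rw [List.length_append]; omega
  refine ⟨L₁.flatten ++ ((u ++ L₂.flatten).take p ++ (u ++ L₂.flatten)), ?_,
    (hsplit ▸ hper).append_take_append hpB, ?_⟩
  · refine isProd_iff_exists_list.mpr ⟨L₁ ++ u.take p :: u :: L₂, ?_, ?_, ?_⟩
    · simp only [List.length_append, List.length_cons] at hL ⊢; omega
    · intro x hx
      rcases List.mem_append.mp hx with hx | hx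
      · exact hfac x (List.mem_append_left _ hx)
      rcases List.mem_cons.mp hx with rfl | hx
      · exact (hfac u (by simp)).take p
      · exact hfac x (List.mem_append_right _ hx)
    · rw [List.flatten_append, List.flatten_cons, List.flatten_cons,
        List.take_append_of_le_length hpu]
  · rw [hsplit]
    simp only [List.length_append, List.length_take_of_le hpB]
    omega

lemma length_flatten_le_mul {L : List (List α)} {p : ℕ} (hL : ∀ u ∈ L, u.length ≤ p) :
    L.flatten.length ≤ L.length * p := by
  rw [List.length_flatten, ← smul_eq_mul, ← List.length_map List.length]
  exact List.sum_le_card_nsmul _ p (by simpa using hL)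

lemma le_pexp {i p : ℕ} {v : List α} {w : ℕ → α} (hprod : IsProd i v w) (hper : HasPeriod v p) :
    (v.length : ℝ≥0∞) / p ≤ pexp i w :=
  le_sSup ⟨v, p, hprod, hper, rfl⟩

lemma natCast_le_pexp {i : ℕ} (hi : 1 ≤ i) (w : ℕ → α) : (i : ℝ≥0∞) ≤ pexp i w := by
  have hprod : IsProd i (List.replicate i (w 0)) w :=
    ⟨fun _ => [w 0], fun _ => ⟨0, rfl⟩, by simp⟩
  have hper : HasPeriod (List.replicate i (w 0)) 1 :=
    ⟨le_rfl, by simpa using hi, fun n hn => by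
      simp only [List.length_replicate] at hn
      simp [show n < i by omega, hn]⟩
  simpa using le_pexp hprod hper

lemma div_add_one_le_pexp_succ {i p : ℕ} {v : List α} {w : ℕ → α} (hprod : IsProd i v w)
    (hper : HasPeriod v p) : (v.length : ℝ≥0∞) / p + 1 ≤ pexp (i + 1) w := by
  obtain ⟨L, hL, hfac, rfl⟩ := isProd_iff_exists_list.mp hprod
  have hp0 : (p : ℝ≥0∞) ≠ 0 := by simpa using (Nat.one_le_iff_ne_zero.mp hper.1)
  by_cases hlong : ∃ u ∈ L, p ≤ u.length
  · obtain ⟨u, hu, hpu⟩ := hlong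
    obtain ⟨v, hprod', hper', hlen⟩ := exists_isProd_succ_of_le_length hL hfac hper hu hpu
    calc (L.flatten.length : ℝ≥0∞) / p + 1 = (v.length : ℝ≥0∞) / p := by
          rw [hlen, Nat.cast_add, ENNReal.add_div, ENNReal.div_self hp0 (ENNReal.natCast_ne_top p)]
      _ ≤ pexp (i + 1) w := le_pexp hprod' hper'
  · push Not at hlong
    have hshort : (L.flatten.length : ℝ≥0∞) ≤ i * p := by
      exact_mod_cast hL ▸ length_flatten_le_mul fun u hu => (hlong u hu).le
    calc (L.flatten.length : ℝ≥0∞) / p + 1 ≤ i + 1 := by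
          gcongr; exact ENNReal.div_le_of_le_mul hshort
      _ ≤ pexp (i + 1) w := by exact_mod_cast natCast_le_pexp (Nat.le_add_left 1 i) w

lemma pexp_add_one_le (i : ℕ) (w : ℕ → α) : pexp i w + 1 ≤ pexp (i + 1) w := by
  rcases Set.eq_empty_or_nonempty
    {x | ∃ v p, IsProd i v w ∧ HasPeriod v p ∧ x = (v.length : ℝ≥0∞) / (p : ℝ≥0∞)} with h | h
  · rw [pexp, h, sSup_empty, bot_eq_zero', zero_add]
    exact le_trans (by simp) (natCast_le_pexp (Nat.le_add_left 1 i) w)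
  · rw [pexp, ENNReal.sSup_add h]
    refine iSup₂_le ?_
    rintro _ ⟨v, p, hprod, hper, rfl⟩
    exact div_add_one_le_pexp_succ hprod hper

end Repetitions

theorem stmt6_general (k i : ℕ) :
    RT i k + 1 ≤ RT (i + 1) k :=
  le_iInf fun w => (add_le_add_left (iInf_le (fun w => pexp i w) w) 1).trans (pexp_add_one_le i w)

theorem stmt6 (k i : ℕ) (hk : 2 ≤ k) (hi : 1 ≤ i) :
    RT i k + 1 ≤ RT (i + 1) k :=
  stmt6_general k i
end

section
/- Let w be an infinite word and suppose pexp_2(w) ≤ β for some β ≥ 3 (every product of two factors of w has exponent at most β). Then for every even i = 2m, pexp_i(w) ≤ m·β. In particular no product of i factors of w is a repetition of exponent greater than m·β. -/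
open scoped ENNReal

/-!
Cut a product of `2m` factors with period `p` into `m` consecutive products of two factors.
Each block still has period `p`, so its length is at most `p · pexp₂(w)`: if the block is at
least `p` long this is the definition of `pexp₂`, and otherwise it holds because
`pexp₂(w) ≥ 1`. Summing over the blocks gives `|v| / p ≤ m · pexp₂(w)`.
-/

section

variable {α : Type*}

/-- Unlike `HasPeriod`, this allows `p > |v|`, so that it passes to factors of `v`. -/
def IsPeriodic (v : List α) (p : ℕ) : Prop :=
  ∀ n, n + p < v.length → v[n]? = v[n + p]?

namespace IsPeriodic

variable {a b : List α} {p : ℕ}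

lemma of_append_left (h : IsPeriodic (a ++ b) p) : IsPeriodic a p := by
  intro n hn
  have hab := h n (by simp; omega)
  rwa [List.getElem?_append_left (by omega), List.getElem?_append_left hn] at hab

lemma of_append_right (h : IsPeriodic (a ++ b) p) : IsPeriodic b p := by
  intro n hn
  have hab := h (a.length + n) (by simp; omega)
  rwa [List.getElem?_append_right (by omega), List.getElem?_append_right (by omega),
    Nat.add_sub_cancel_left, Nat.add_assoc, Nat.add_sub_cancel_left] at hab

end IsPeriodic

lemma IsProd.exists_append {i j : ℕ} {v : List α} {w : ℕ → α} (h : IsProd (i + j) v w) :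
    ∃ a b, v = a ++ b ∧ IsProd i a w ∧ IsProd j b w := by
  obtain ⟨us, hus, rfl⟩ := h
  refine ⟨_, _, ?_, ⟨fun k => us (Fin.castAdd j k), fun k => hus _, rfl⟩,
    ⟨fun k => us (Fin.natAdd i k), fun k => hus _, rfl⟩⟩
  rw [List.ofFn_add, List.flatten_append]
  rfl

lemma one_le_pexp_two (w : ℕ → α) : 1 ≤ pexp 2 w := by
  refine le_sSup ⟨[w 0], 1, ⟨![[w 0], []], ?_, rfl⟩, ⟨le_rfl, le_rfl, by simp⟩, by simp⟩
  intro k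
  fin_cases k
  exacts [⟨0, rfl⟩, ⟨0, rfl⟩]

lemma div_le_pexp_two {w : ℕ → α} {b : List α} {p : ℕ} (hb : IsProd 2 b w)
    (hper : IsPeriodic b p) (hp : 1 ≤ p) : (b.length : ℝ≥0∞) / p ≤ pexp 2 w := by
  rcases le_or_gt p b.length with hlen | hlen
  · exact le_sSup ⟨b, p, hb, ⟨hp, hlen, hper⟩, rfl⟩
  · refine le_trans ?_ (one_le_pexp_two w)
    exact ENNReal.div_le_of_le_mul (by rw [one_mul]; exact_mod_cast hlen.le)

lemma div_le_mul_pexp_two {w : ℕ → α} {p : ℕ} (hp : 1 ≤ p) (m : ℕ) {v : List α}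
    (hv : IsProd (2 * m) v w) (hper : IsPeriodic v p) :
    (v.length : ℝ≥0∞) / p ≤ m * pexp 2 w := by
  induction m generalizing v with
  | zero =>
    obtain ⟨us, -, rfl⟩ := hv
    simp
  | succ m ih =>
    obtain ⟨a, b, rfl, ha, hb⟩ := (Nat.mul_succ 2 m ▸ hv).exists_append
    calc ((a ++ b).length : ℝ≥0∞) / p = (a.length : ℝ≥0∞) / p + (b.length : ℝ≥0∞) / p := by
          rw [List.length_append, Nat.cast_add, ENNReal.add_div]
      _ ≤ m * pexp 2 w + pexp 2 w :=
          add_le_add (ih ha hper.of_append_left) (div_le_pexp_two hb hper.of_append_right hp)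
      _ = (m + 1 : ℕ) * pexp 2 w := by push_cast; ring

lemma pexp_two_mul_le (w : ℕ → α) (m : ℕ) : pexp (2 * m) w ≤ m * pexp 2 w :=
  sSup_le <| by
    rintro x ⟨v, p, hv, ⟨hp, -, hper⟩, rfl⟩
    exact div_le_mul_pexp_two hp m hv hper

end

theorem stmt9_general {α : Type*} (w : ℕ → α) (β : ℝ≥0∞)
    (h2 : pexp 2 w ≤ β) (m : ℕ) :
    pexp (2 * m) w ≤ m * β ∧
    ∀ v : List α, ∀ p : ℕ, IsProd (2 * m) v w → HasPeriod v p →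
      (v.length : ℝ≥0∞) / (p : ℝ≥0∞) ≤ m * β := by
  have hle : pexp (2 * m) w ≤ m * β := (pexp_two_mul_le w m).trans (by gcongr)
  refine ⟨hle, fun v p hv hp => le_trans (le_sSup ?_) hle⟩
  exact ⟨v, p, hv, hp, rfl⟩

theorem stmt9 {α : Type*} (w : ℕ → α) (β : ℝ≥0∞) (hβ : 3 ≤ β)
    (h2 : pexp 2 w ≤ β) (m : ℕ) (hm : 1 ≤ m) :
    pexp (2 * m) w ≤ m * β ∧
    ∀ v : List α, ∀ p : ℕ, IsProd (2 * m) v w → HasPeriod v p →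
      (v.length : ℝ≥0∞) / (p : ℝ≥0∞) ≤ m * β :=
  stmt9_general w β h2 m
end

section
/- If w is a recurrent infinite word and u, v are factors of w, then the concatenation vu is a product of two factors of w, and moreover for any factor pxs of w (with x possibly empty), the 'circular' word sp is a product of two factors of w. Consequently, cexp(w) ≤ pexp_2(w) for every recurrent infinite word w. -/
open scoped ENNReal

/-! The word `s ++ p` is the product of its two halves `s` and `p`, both of which are factors
of `w` as soon as `p ++ x ++ s` is; so every circular shift counted by `cexp` is also counted
by `pexp 2`. -/

section Factors

variable {α : Type*} {w : ℕ → α}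

theorem factorAt_iff {u : List α} {m : ℕ} :
    FactorAt u w m ↔ ∀ i (hi : i < u.length), u[i] = w (m + i) := by
  constructor
  · intro h i hi
    rw [List.getElem_of_eq h]
    simp
  · intro h
    exact List.ext_getElem (by simp) fun i hi _ => by simp [h i hi]

theorem FactorAt.of_append_infix {a u b : List α} {m : ℕ} (h : FactorAt (a ++ u ++ b) w m) :
    FactorAt u w (m + a.length) := by
  rw [factorAt_iff] at h ⊢
  intro i hi
  have := h (a.length + i) (by simp; omega)
  rw [List.getElem_append_left (by simp; omega), List.getElem_append_right (by omega)] at this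
  simpa [Nat.add_assoc] using this

theorem IsFactorI.of_infix {u v : List α} (huv : u <:+: v) (hv : IsFactorI v w) :
    IsFactorI u w := by
  obtain ⟨a, b, rfl⟩ := huv
  obtain ⟨m, hm⟩ := hv
  exact ⟨m + a.length, hm.of_append_infix⟩

theorem isProd_two_append {u v : List α} (hu : IsFactorI u w) (hv : IsFactorI v w) :
    IsProd 2 (u ++ v) w := by
  refine ⟨![u, v], fun j => ?_, by simp⟩
  fin_cases j <;> assumption

theorem isProd_two_circularShift {p x s : List α} (h : IsFactorI (p ++ x ++ s) w) :
    IsProd 2 (s ++ p) w :=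
  isProd_two_append (h.of_infix (List.suffix_append _ s).isInfix)
    (h.of_infix ((List.prefix_append p x).trans (List.prefix_append _ s)).isInfix)

theorem cexp_le_pexp_two : cexp w ≤ pexp 2 w := by
  apply sSup_le_sSup
  rintro _ ⟨p, x, s, q, hf, hper, rfl⟩
  exact ⟨s ++ p, q, isProd_two_circularShift hf, hper, rfl⟩

end Factors

theorem stmt12_general {α : Type*} (w : ℕ → α) :
    (∀ u v : List α, IsFactorI u w → IsFactorI v w → IsProd 2 (v ++ u) w) ∧
    (∀ p x s : List α, IsFactorI (p ++ x ++ s) w → IsProd 2 (s ++ p) w) ∧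
    cexp w ≤ pexp 2 w :=
  ⟨fun _ _ hu hv => isProd_two_append hv hu, fun _ _ _ => isProd_two_circularShift,
    cexp_le_pexp_two⟩

theorem stmt12 {α : Type*} (w : ℕ → α)
    (hrec : ∀ u : List α, IsFactorI u w → ∀ N : ℕ, ∃ m, N ≤ m ∧ FactorAt u w m) :
    (∀ u v : List α, IsFactorI u w → IsFactorI v w → IsProd 2 (v ++ u) w) ∧
    (∀ p x s : List α, IsFactorI (p ++ x ++ s) w → IsProd 2 (s ++ p) w) ∧
    cexp w ≤ pexp 2 w :=
  stmt12_general w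
end

section
/- Let w be a recurrent infinite word, and let u, v be factors of w. Then there exists a factor of w of the form u·x·v for some word x. Consequently, pexp_2(w) ≤ cexp(w) for recurrent w. -/
open scoped ENNReal

lemma factorAt_append {α : Type*} {u v : List α} {w : ℕ → α} {m : ℕ}
    (hu : FactorAt u w m) (hv : FactorAt v w (m + u.length)) :
    FactorAt (u ++ v) w m := by
  unfold FactorAt at *
  rw [List.length_append, List.range_add, List.map_append, List.map_map]
  conv_lhs => rw [hu, hv]
  congr 1
  simp [Function.comp_def, Nat.add_assoc]

lemma glue {α : Type*} (w : ℕ → α)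
    (hrec : ∀ u : List α, IsFactorI u w → ∀ N : ℕ, ∃ m, N ≤ m ∧ FactorAt u w m)
    (u v : List α) (hu : IsFactorI u w) (hv : IsFactorI v w) :
    ∃ x : List α, IsFactorI (u ++ x ++ v) w := by
  obtain ⟨m, hm⟩ := hu
  obtain ⟨m', hm', hv'⟩ := hrec v hv (m + u.length)
  refine ⟨(List.range (m' - (m + u.length))).map (fun n => w (m + u.length + n)), m, ?_⟩
  have hx : FactorAt ((List.range (m' - (m + u.length))).map (fun n => w (m + u.length + n))) w
      (m + u.length) := by
    unfold FactorAt
    simp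
  have h1 := factorAt_append hm hx
  have h2 : FactorAt v w (m + (u ++ (List.range (m' - (m + u.length))).map
      (fun n => w (m + u.length + n))).length) := by
    have : m + (u ++ (List.range (m' - (m + u.length))).map
        (fun n => w (m + u.length + n))).length = m' := by
      simp; omega
    rw [this]; exact hv'
  exact factorAt_append h1 h2

theorem stmt14 {α : Type*} (w : ℕ → α)
    (hrec : ∀ u : List α, IsFactorI u w → ∀ N : ℕ, ∃ m, N ≤ m ∧ FactorAt u w m) :
    (∀ u v : List α, IsFactorI u w → IsFactorI v w →
      ∃ x : List α, IsFactorI (u ++ x ++ v) w) ∧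
    pexp 2 w ≤ cexp w := by
  refine ⟨glue w hrec, sSup_le_sSup ?_⟩
  rintro x ⟨v, p, ⟨us, hus, hv⟩, hper, hx⟩
  have hflat : v = us 0 ++ us 1 := by
    simp [List.ofFn_succ] at hv
    simpa using hv
  obtain ⟨xx, hxx⟩ := glue w hrec (us 1) (us 0) (hus 1) (hus 0)
  exact ⟨us 1, xx, us 0, p, hxx, hflat ▸ hper, hflat ▸ hx⟩
end
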